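/- arXiv:2205.14232 — 11 statements merged into one kernel-verified Lean document; each statement's English description precedes it below -/
import Mathlib

section
/- Let A be an m×n real matrix and α ≥ 0 a real number. For x ∈ ℝᵐ and y ∈ ℝⁿ define the CGO field of the bilinear game f(x,y) = xᵀAy by g_α(x,y) = ((I+α²AAᵀ)⁻¹(Ay + α AAᵀ x), (I+α²AᵀA)⁻¹(−Aᵀx + α AᵀA y)). Then ⟨g_α(x,y),(x,y)⟩ = α·( xᵀ(I+α²AAᵀ)⁻¹AAᵀx + yᵀ(I+α²AᵀA)⁻¹AᵀAy ). Consequently ⟨g_α(x,y),(x,y)⟩ ≥ 0 for every (x,y), and for α = 0 one has ⟨g₀(x,y),(x,y)⟩ = xᵀAy − yᵀAᵀx = 0 for every (x,y) (null coherence of the bilinear game). -/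
/-!
The push-through identity `(1 + α²AAᵀ)⁻¹ A = A (1 + α²AᵀA)⁻¹` does all the work.
Transposed, it says that the two cross terms `⟨(1 + α²AAᵀ)⁻¹Ay, x⟩` and `⟨(1 + α²AᵀA)⁻¹Aᵀx, y⟩`
of `⟨g_α(x,y),(x,y)⟩` are equal, so they cancel. It also rewrites `(1 + α²AAᵀ)⁻¹AAᵀ` as
`A (1 + α²AᵀA)⁻¹ Aᵀ`, a congruence of a positive semidefinite matrix, which gives the sign.
-/

open Matrix

/-- The CGO field of the bilinear game `f(x,y) = xᵀ A y`. -/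
noncomputable def gCGO {m n : ℕ} (A : Matrix (Fin m) (Fin n) ℝ) (α : ℝ)
    (x : Fin m → ℝ) (y : Fin n → ℝ) : (Fin m → ℝ) × (Fin n → ℝ) :=
  (((1 + α ^ 2 • (A * Aᵀ))⁻¹).mulVec (A.mulVec y + α • (A * Aᵀ).mulVec x),
   ((1 + α ^ 2 • (Aᵀ * A))⁻¹).mulVec (-(Aᵀ.mulVec x) + α • (Aᵀ * A).mulVec y))

namespace Matrix

variable {m n R : Type*} [Fintype m] [Fintype n] [DecidableEq m]

theorem posSemidef_one_add_smul_mul_transpose (A : Matrix m n ℝ) {c : ℝ} (hc : 0 ≤ c) :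
    (1 + c • (A * Aᵀ)).PosSemidef := by
  have hAAt : (A * Aᵀ).PosSemidef := by
    simpa only [conjTranspose_eq_transpose_of_trivial] using posSemidef_self_mul_conjTranspose A
  exact PosSemidef.one.add (hAAt.smul hc)

variable [DecidableEq n]

theorem inv_one_add_mul_mul_eq_mul_inv_one_add_mul [CommRing R] (A : Matrix m n R)
    (B : Matrix n m R) : (1 + A * B)⁻¹ * A = A * (1 + B * A)⁻¹ := by
  have hswap : A * (1 + B * A) = (1 + A * B) * A := by
    rw [Matrix.mul_add, Matrix.add_mul, Matrix.mul_one, Matrix.one_mul, Matrix.mul_assoc]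
  by_cases h : IsUnit (1 + A * B).det
  · have h' : IsUnit (1 + B * A).det := det_one_add_mul_comm A B ▸ h
    calc (1 + A * B)⁻¹ * A
        = (1 + A * B)⁻¹ * (A * (1 + B * A)) * (1 + B * A)⁻¹ := by
          rw [Matrix.mul_assoc, mul_nonsing_inv_cancel_right _ _ h']
      _ = A * (1 + B * A)⁻¹ := by
          rw [hswap, ← Matrix.mul_assoc, nonsing_inv_mul _ h, Matrix.one_mul]
  · -- By the Weinstein–Aronszajn identity both inverses are the junk value `0`.
    have h' : ¬IsUnit (1 + B * A).det := det_one_add_mul_comm A B ▸ h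
    rw [nonsing_inv_apply_not_isUnit _ h, nonsing_inv_apply_not_isUnit _ h',
      Matrix.zero_mul, Matrix.mul_zero]

theorem inv_one_add_smul_mul_transpose_mul [CommRing R] (A : Matrix m n R) (c : R) :
    (1 + c • (A * Aᵀ))⁻¹ * A = A * (1 + c • (Aᵀ * A))⁻¹ := by
  simpa only [Matrix.mul_smul, Matrix.smul_mul] using
    inv_one_add_mul_mul_eq_mul_inv_one_add_mul A (c • Aᵀ)

theorem transpose_inv_one_add_smul_mul_transpose_mul [CommRing R] (A : Matrix m n R) (c : R) :
    ((1 + c • (A * Aᵀ))⁻¹ * A)ᵀ = (1 + c • (Aᵀ * A))⁻¹ * Aᵀ := by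
  have hpush := inv_one_add_smul_mul_transpose_mul Aᵀ c
  rw [transpose_transpose] at hpush
  rw [hpush, transpose_mul, transpose_nonsing_inv, transpose_add, transpose_one, transpose_smul,
    transpose_mul, transpose_transpose]

theorem posSemidef_inv_one_add_smul_mul_transpose_mul (A : Matrix m n ℝ) {c : ℝ}
    (hc : 0 ≤ c) :
    ((1 + c • (A * Aᵀ))⁻¹ * (A * Aᵀ)).PosSemidef := by
  rw [← Matrix.mul_assoc, inv_one_add_smul_mul_transpose_mul]
  simpa only [conjTranspose_eq_transpose_of_trivial, transpose_transpose] using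
    (posSemidef_one_add_smul_mul_transpose Aᵀ hc).inv.mul_mul_conjTranspose_same A

end Matrix

theorem gCGO_inner_eq {m n : ℕ} (A : Matrix (Fin m) (Fin n) ℝ) (α : ℝ)
    (x : Fin m → ℝ) (y : Fin n → ℝ) :
    (gCGO A α x y).1 ⬝ᵥ x + (gCGO A α x y).2 ⬝ᵥ y =
      α * (x ⬝ᵥ ((1 + α ^ 2 • (A * Aᵀ))⁻¹ * (A * Aᵀ)) *ᵥ x +
           y ⬝ᵥ ((1 + α ^ 2 • (Aᵀ * A))⁻¹ * (Aᵀ * A)) *ᵥ y) := by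
  have hcross : x ⬝ᵥ ((1 + α ^ 2 • (A * Aᵀ))⁻¹ * A) *ᵥ y =
      y ⬝ᵥ ((1 + α ^ 2 • (Aᵀ * A))⁻¹ * Aᵀ) *ᵥ x := by
    rw [← transpose_inv_one_add_smul_mul_transpose_mul, dotProduct_transpose_mulVec]
  simp only [gCGO, mulVec_add, mulVec_smul, mulVec_neg, mulVec_mulVec, add_dotProduct,
    smul_dotProduct, neg_dotProduct, smul_eq_mul]
  rw [dotProduct_comm _ x, dotProduct_comm _ x, dotProduct_comm _ y, dotProduct_comm _ y, hcross]
  ring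

/-- For the bilinear game `f(x,y) = xᵀ A y`, one has
`⟨g_α(x,y),(x,y)⟩ = α (xᵀ(I+α²AAᵀ)⁻¹AAᵀx + yᵀ(I+α²AᵀA)⁻¹AᵀAy) ≥ 0`, and for `α = 0`,
`⟨g₀(x,y),(x,y)⟩ = xᵀAy − yᵀAᵀx = 0` (null coherence). -/
theorem bilinear_game_gCGO_inner (m n : ℕ) (A : Matrix (Fin m) (Fin n) ℝ) (α : ℝ)
    (hα : 0 ≤ α) (x : Fin m → ℝ) (y : Fin n → ℝ) :
    (gCGO A α x y).1 ⬝ᵥ x + (gCGO A α x y).2 ⬝ᵥ y =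
      α * (x ⬝ᵥ (((1 + α ^ 2 • (A * Aᵀ))⁻¹ * (A * Aᵀ)).mulVec x) +
           y ⬝ᵥ (((1 + α ^ 2 • (Aᵀ * A))⁻¹ * (Aᵀ * A)).mulVec y)) ∧
    0 ≤ (gCGO A α x y).1 ⬝ᵥ x + (gCGO A α x y).2 ⬝ᵥ y ∧
    (gCGO A 0 x y).1 ⬝ᵥ x + (gCGO A 0 x y).2 ⬝ᵥ y =
      x ⬝ᵥ A.mulVec y - y ⬝ᵥ Aᵀ.mulVec x ∧
    x ⬝ᵥ A.mulVec y - y ⬝ᵥ Aᵀ.mulVec x = 0 := by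
  have hx := (posSemidef_inv_one_add_smul_mul_transpose_mul A (sq_nonneg α))
    |>.dotProduct_mulVec_nonneg x
  have hy := (posSemidef_inv_one_add_smul_mul_transpose_mul Aᵀ (sq_nonneg α))
    |>.dotProduct_mulVec_nonneg y
  rw [transpose_transpose] at hy
  refine ⟨gCGO_inner_eq A α x y, ?_, ?_, ?_⟩
  · rw [gCGO_inner_eq]
    exact mul_nonneg hα (add_nonneg hx hy)
  · simp [gCGO, dotProduct_comm, sub_eq_add_neg]
  · rw [dotProduct_transpose_mulVec, sub_self]
end

section
/- Let A be an m×n real matrix and α > 0 a real number, and let g_α(x,y) = ((I+α²AAᵀ)⁻¹(Ay + α AAᵀ x), (I+α²AᵀA)⁻¹(−Aᵀx + α AᵀA y)) be the CGO field of the bilinear game f(x,y) = xᵀAy. If (x,y) ∈ ℝᵐ × ℝⁿ satisfies Aᵀx ≠ 0 or Ay ≠ 0, then ⟨g_α(x,y),(x,y)⟩ > 0. In particular, if A is square and invertible then ⟨g_α(z),z⟩ > 0 for every z ≠ 0, so the saddle point 0 of the bilinear game satisfies the strict α-Minty variational inequality. -/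
open Matrix

/-! With `M = (1 + α²AAᵀ)⁻¹` and `N = (1 + α²AᵀA)⁻¹`, the push-through identity
`Aᵀ M = N Aᵀ` makes the cross terms `xᵀ M A y` and `yᵀ N Aᵀ x` of `⟨g_α(x,y), (x,y)⟩`
cancel, leaving `α (Aᵀx)ᵀ N (Aᵀx) + α (Ay)ᵀ M (Ay)`: a sum of positive definite quadratic
forms. -/

namespace Matrix

variable {m n K : Type*} [Fintype m] [Fintype n]

theorem mul_inv_one_add_mul_comm [DecidableEq m] [DecidableEq n] [Field K]
    (A : Matrix m n K) (B : Matrix n m K) (h : IsUnit (1 + A * B).det) :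
    B * (1 + A * B)⁻¹ = (1 + B * A)⁻¹ * B := by
  have h' : IsUnit (1 + B * A).det := det_one_add_mul_comm A B ▸ h
  have hcomm : (1 + B * A) * B = B * (1 + A * B) := by
    simp only [Matrix.add_mul, Matrix.mul_add, Matrix.one_mul, Matrix.mul_one, Matrix.mul_assoc]
  calc B * (1 + A * B)⁻¹ = (1 + B * A)⁻¹ * ((1 + B * A) * B) * (1 + A * B)⁻¹ := by
        rw [← Matrix.mul_assoc, nonsing_inv_mul _ h', Matrix.one_mul]
    _ = (1 + B * A)⁻¹ * B := by
        rw [hcomm, Matrix.mul_assoc, Matrix.mul_assoc B, mul_nonsing_inv _ h, Matrix.mul_one]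

theorem posDef_one_add_smul_mul_transpose [DecidableEq m] (A : Matrix m n ℝ) {c : ℝ}
    (hc : 0 ≤ c) : (1 + c • (A * Aᵀ)).PosDef := by
  refine PosDef.one.add_posSemidef (PosSemidef.smul ?_ hc)
  simpa using posSemidef_self_mul_conjTranspose A

theorem transpose_mul_inv_one_add_smul_mul_transpose [DecidableEq m] [DecidableEq n]
    (A : Matrix m n ℝ) {c : ℝ} (hc : 0 ≤ c) :
    Aᵀ * (1 + c • (A * Aᵀ))⁻¹ = (1 + c • (Aᵀ * A))⁻¹ * Aᵀ := by
  have h := mul_inv_one_add_mul_comm (c • A) Aᵀ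
  simp only [Matrix.smul_mul, Matrix.mul_smul] at h
  exact h (posDef_one_add_smul_mul_transpose A hc).det_pos.ne'.isUnit

theorem transpose_inv_one_add_smul_mul_transpose [DecidableEq m] [CommRing K]
    (A : Matrix m n K) (c : K) : (1 + c • (A * Aᵀ))⁻¹ᵀ = (1 + c • (A * Aᵀ))⁻¹ := by
  rw [transpose_nonsing_inv, transpose_add, transpose_one, transpose_smul, transpose_mul,
    transpose_transpose]

theorem mulVec_dotProduct [CommSemiring K] (M : Matrix m n K) (v : n → K) (w : m → K) :
    (M *ᵥ v) ⬝ᵥ w = v ⬝ᵥ Mᵀ *ᵥ w := by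
  rw [dotProduct_transpose_mulVec, dotProduct_comm]

section Intertwining

variable [CommSemiring K] {A : Matrix m n K} {P : Matrix m m K} {Q : Matrix n n K}

theorem mulVec_mulVec_dotProduct_of_transpose_mul_eq (hP : Pᵀ = P) (h : Aᵀ * P = Q * Aᵀ)
    (x : m → K) (y : n → K) : (P *ᵥ A *ᵥ y) ⬝ᵥ x = (Q *ᵥ Aᵀ *ᵥ x) ⬝ᵥ y := by
  rw [mulVec_dotProduct, hP, mulVec_dotProduct, mulVec_mulVec, h, ← mulVec_mulVec,
    dotProduct_comm]

theorem mulVec_mul_transpose_dotProduct_of_transpose_mul_eq (hP : Pᵀ = P)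
    (h : Aᵀ * P = Q * Aᵀ) (x : m → K) :
    (P *ᵥ (A * Aᵀ) *ᵥ x) ⬝ᵥ x = (Aᵀ *ᵥ x) ⬝ᵥ Q *ᵥ Aᵀ *ᵥ x := by
  rw [← mulVec_mulVec, mulVec_mulVec_dotProduct_of_transpose_mul_eq hP h, dotProduct_comm]

end Intertwining

theorem transpose_mulVec_ne_zero_or_mulVec_ne_zero [DecidableEq m] [CommRing K]
    {B : Matrix m m K} (hB : IsUnit B.det) {x y : m → K} (hxy : (x, y) ≠ (0, 0)) :
    Bᵀ *ᵥ x ≠ 0 ∨ B *ᵥ y ≠ 0 := by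
  have inj (C : Matrix m m K) (hC : IsUnit C.det) : Function.Injective C.mulVec :=
    mulVec_injective_of_isUnit ((isUnit_iff_isUnit_det C).2 hC)
  by_contra! h
  refine hxy (Prod.ext (inj Bᵀ (by rwa [det_transpose]) ?_) (inj B hB ?_)) <;>
    simp [h.1, h.2]

end Matrix

theorem gCGO_dotProduct_add {m n : ℕ} (A : Matrix (Fin m) (Fin n) ℝ) (α : ℝ)
    (x : Fin m → ℝ) (y : Fin n → ℝ) :
    (gCGO A α x y).1 ⬝ᵥ x + (gCGO A α x y).2 ⬝ᵥ y =
      α * ((Aᵀ *ᵥ x) ⬝ᵥ (1 + α ^ 2 • (Aᵀ * A))⁻¹ *ᵥ Aᵀ *ᵥ x) +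
        α * ((A *ᵥ y) ⬝ᵥ (1 + α ^ 2 • (A * Aᵀ))⁻¹ *ᵥ A *ᵥ y) := by
  have hc : 0 ≤ α ^ 2 := sq_nonneg α
  have hM := transpose_inv_one_add_smul_mul_transpose A (α ^ 2)
  have hN := transpose_inv_one_add_smul_mul_transpose Aᵀ (α ^ 2)
  have hpush := transpose_mul_inv_one_add_smul_mul_transpose A hc
  have hpush' := transpose_mul_inv_one_add_smul_mul_transpose Aᵀ hc
  have hy := mulVec_mul_transpose_dotProduct_of_transpose_mul_eq hN hpush' y
  simp only [transpose_transpose] at hy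
  simp only [gCGO, mulVec_add, mulVec_neg, mulVec_smul, add_dotProduct, neg_dotProduct,
    smul_dotProduct, smul_eq_mul]
  rw [mulVec_mulVec_dotProduct_of_transpose_mul_eq hM hpush,
    mulVec_mul_transpose_dotProduct_of_transpose_mul_eq hM hpush, hy]
  ring

theorem gCGO_dotProduct_add_pos {m n : ℕ} (A : Matrix (Fin m) (Fin n) ℝ) {α : ℝ}
    (hα : 0 < α) {x : Fin m → ℝ} {y : Fin n → ℝ}
    (h : Aᵀ *ᵥ x ≠ 0 ∨ A *ᵥ y ≠ 0) :
    0 < (gCGO A α x y).1 ⬝ᵥ x + (gCGO A α x y).2 ⬝ᵥ y := by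
  have hc : 0 ≤ α ^ 2 := sq_nonneg α
  have hM := (posDef_one_add_smul_mul_transpose A hc).inv
  have hN := (posDef_one_add_smul_mul_transpose Aᵀ hc).inv
  rw [transpose_transpose] at hN
  have hu := hN.posSemidef.dotProduct_mulVec_nonneg (Aᵀ *ᵥ x)
  have hw := hM.posSemidef.dotProduct_mulVec_nonneg (A *ᵥ y)
  simp only [star_trivial] at hu hw
  rw [gCGO_dotProduct_add]
  rcases h with hx | hy
  · have hu' := hN.dotProduct_mulVec_pos hx
    simp only [star_trivial] at hu'
    exact add_pos_of_pos_of_nonneg (mul_pos hα hu') (mul_nonneg hα.le hw)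
  · have hw' := hM.dotProduct_mulVec_pos hy
    simp only [star_trivial] at hw'
    exact add_pos_of_nonneg_of_pos (mul_nonneg hα.le hu) (mul_pos hα hw')

/-- For `α > 0`, the CGO field of a bilinear game satisfies `⟨g_α(x,y),(x,y)⟩ > 0` whenever
`Aᵀx ≠ 0` or `Ay ≠ 0`; in particular if `A` is square and invertible the origin satisfies
the strict α-Minty variational inequality. -/
theorem bilinear_game_strict_alpha_MVI (m n : ℕ) (A : Matrix (Fin m) (Fin n) ℝ)
    (α : ℝ) (hα : 0 < α) :
    (∀ (x : Fin m → ℝ) (y : Fin n → ℝ), (Aᵀ.mulVec x ≠ 0 ∨ A.mulVec y ≠ 0) →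
      0 < (gCGO A α x y).1 ⬝ᵥ x + (gCGO A α x y).2 ⬝ᵥ y) ∧
    (∀ B : Matrix (Fin m) (Fin m) ℝ, IsUnit B.det →
      ∀ (x y : Fin m → ℝ), (x, y) ≠ (0, 0) →
        0 < (gCGO B α x y).1 ⬝ᵥ x + (gCGO B α x y).2 ⬝ᵥ y) :=
  ⟨fun _ _ h => gCGO_dotProduct_add_pos A hα h, fun B hB _ _ hxy =>
    gCGO_dotProduct_add_pos B hα (transpose_mulVec_ne_zero_or_mulVec_ne_zero hB hxy)⟩
end

section
/- Let k, α, x, y, u, v be real numbers satisfying the linear system u + α·v = k·x + y and −α·u + v = k·y − x (i.e., (u,v) = g_α(x,y) is the CGO field of the game f_k(x,y) = (k/2)(x² − y²) + xy). Then x·u + y·v = ((k+α)/(1+α²))·(x² + y²). In particular ⟨g_α(x,y),(x,y)⟩ > 0 whenever α > −k and (x,y) ≠ (0,0), and ⟨g_α(x,y),(x,y)⟩ = 0 for all (x,y) when α = −k. -/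
/-- For the family `f_k(x,y) = (k/2)(x² − y²) + xy`, if `(u,v) = g_α(x,y)` solves
`u + αv = kx + y`, `−αu + v = ky − x`, then
`xu + yv = ((k+α)/(1+α²))(x² + y²)`; in particular this is positive when `α > −k` and
`(x,y) ≠ (0,0)`, and zero when `α = −k`. -/
theorem quadratic_family_gCGO_inner (k α x y u v : ℝ)
    (h1 : u + α * v = k * x + y) (h2 : -α * u + v = k * y - x) :
    x * u + y * v = (k + α) / (1 + α ^ 2) * (x ^ 2 + y ^ 2) ∧
    (-k < α → (x, y) ≠ (0, 0) → 0 < x * u + y * v) ∧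
    (α = -k → x * u + y * v = 0) := by
  have hd : (0:ℝ) < 1 + α ^ 2 := by positivity
  have key : x * u + y * v = (k + α) / (1 + α ^ 2) * (x ^ 2 + y ^ 2) := by
    field_simp
    linear_combination (x + α * y) * h1 + (y - α * x) * h2
  refine ⟨key, ?_, ?_⟩
  · intro hα hxy
    have hx : x ^ 2 + y ^ 2 > 0 := by
      rcases (by simpa [Prod.ext_iff] using hxy : ¬(x = 0 ∧ y = 0)) with h
      rcases eq_or_ne x 0 with hx0 | hx0
      · have : y ≠ 0 := fun hy0 => h ⟨hx0, hy0⟩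
        positivity
      · positivity
    rw [key]
    have : 0 < k + α := by linarith
    positivity
  · intro hα
    rw [key, hα]
    ring
end

section
/- Let M be an m×n real matrix, α ∈ ℝ, a ∈ ℝᵐ, b ∈ ℝⁿ, and define u = (I + α²MMᵀ)⁻¹(a + α·M·b) ∈ ℝᵐ and v = (I + α²MᵀM)⁻¹(−b + α·Mᵀ·a) ∈ ℝⁿ. Then ‖Mᵀu‖² + ‖Mv‖² = aᵀ(I + α²MMᵀ)⁻¹MMᵀ·a + bᵀ(I + α²MᵀM)⁻¹MᵀM·b. -/
open Matrix

lemma dot_aux {p q : ℕ} (X : Matrix (Fin p) (Fin q) ℝ) (y : Fin q → ℝ) (z : Fin p → ℝ) :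
    (X *ᵥ y) ⬝ᵥ z = y ⬝ᵥ (Xᵀ *ᵥ z) := by
  rw [dotProduct_comm, dotProduct_mulVec, ← mulVec_transpose, dotProduct_comm]

lemma bilin_aux {p q : ℕ} (S : Matrix (Fin p) (Fin p) ℝ) (hS : Sᵀ = S)
    (N : Matrix (Fin p) (Fin q) ℝ) (c : ℝ) (x : Fin p → ℝ) (y : Fin q → ℝ) :
    (x + c • (N *ᵥ y)) ⬝ᵥ (S *ᵥ (x + c • (N *ᵥ y))) =
      x ⬝ᵥ (S *ᵥ x) + 2*c*(x ⬝ᵥ ((S*N) *ᵥ y)) + c^2 * (y ⬝ᵥ ((Nᵀ*S*N) *ᵥ y)) := by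
  have h1 : (N *ᵥ y) ⬝ᵥ (S *ᵥ x) = x ⬝ᵥ ((S*N) *ᵥ y) := by
    rw [dot_aux, mulVec_mulVec, dotProduct_comm x, dot_aux, transpose_mul, hS]
  have h2 : x ⬝ᵥ (S *ᵥ (N *ᵥ y)) = x ⬝ᵥ ((S*N) *ᵥ y) := by rw [mulVec_mulVec]
  have h3 : (N *ᵥ y) ⬝ᵥ (S *ᵥ (N *ᵥ y)) = y ⬝ᵥ ((Nᵀ*S*N) *ᵥ y) := by
    rw [dot_aux, mulVec_mulVec, mulVec_mulVec, Matrix.mul_assoc]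
  simp only [mulVec_add, mulVec_smul, dotProduct_add, add_dotProduct, smul_dotProduct,
    dotProduct_smul, smul_eq_mul, h1, h2, h3]
  ring

lemma posdef_aux {p q : ℕ} (M : Matrix (Fin p) (Fin q) ℝ) (α : ℝ) :
    (1 + α ^ 2 • (M * Mᵀ)).PosDef := by
  have h1 : (α ^ 2 • (M * Mᵀ)) = (α • M) * (α • M)ᴴ := by
    simp [conjTranspose_eq_transpose_of_trivial, smul_mul_assoc, mul_smul_comm, smul_smul, sq]
  exact h1 ▸ (Matrix.PosDef.one).add_posSemidef (posSemidef_self_mul_conjTranspose _)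

/-- The sum of the squared norms of the cross-Hessian images of the CGO update directions
equals the corresponding quadratic forms of the gradients:
`‖Mᵀu‖² + ‖Mv‖² = aᵀ(I+α²MMᵀ)⁻¹MMᵀa + bᵀ(I+α²MᵀM)⁻¹MᵀMb`. -/
theorem cgo_cross_norm_identity (m n : ℕ) (M : Matrix (Fin m) (Fin n) ℝ) (α : ℝ)
    (a : Fin m → ℝ) (b : Fin n → ℝ) (u : Fin m → ℝ) (v : Fin n → ℝ)
    (hu : u = ((1 + α ^ 2 • (M * Mᵀ))⁻¹).mulVec (a + α • M.mulVec b))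
    (hv : v = ((1 + α ^ 2 • (Mᵀ * M))⁻¹).mulVec (-b + α • Mᵀ.mulVec a)) :
    (Mᵀ.mulVec u) ⬝ᵥ (Mᵀ.mulVec u) + (M.mulVec v) ⬝ᵥ (M.mulVec v) =
      a ⬝ᵥ (((1 + α ^ 2 • (M * Mᵀ))⁻¹ * (M * Mᵀ)).mulVec a) +
      b ⬝ᵥ (((1 + α ^ 2 • (Mᵀ * M))⁻¹ * (Mᵀ * M)).mulVec b) := by
  subst hu hv
  set P : Matrix (Fin m) (Fin m) ℝ := M * Mᵀ with hP
  set Q : Matrix (Fin n) (Fin n) ℝ := Mᵀ * M with hQ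
  set A : Matrix (Fin m) (Fin m) ℝ := 1 + α ^ 2 • P with hA
  set B : Matrix (Fin n) (Fin n) ℝ := 1 + α ^ 2 • Q with hB
  -- basic facts
  have hAdet : IsUnit A.det := (isUnit_iff_isUnit_det A).mp (posdef_aux M α).isUnit
  have hBdet : IsUnit B.det := by
    have := (isUnit_iff_isUnit_det (1 + α ^ 2 • (Mᵀ * Mᵀᵀ))).mp (posdef_aux Mᵀ α).isUnit
    simpa [hB, hQ, transpose_transpose] using this
  have hAA : A⁻¹ * A = 1 := nonsing_inv_mul A hAdet
  have hAA' : A * A⁻¹ = 1 := mul_nonsing_inv A hAdet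
  have hBB : B⁻¹ * B = 1 := nonsing_inv_mul B hBdet
  have hBB' : B * B⁻¹ = 1 := mul_nonsing_inv B hBdet
  have hAt : Aᵀ = A := by simp [hA, hP, transpose_add, transpose_smul, transpose_mul]
  have hBt : Bᵀ = B := by simp [hB, hQ, transpose_add, transpose_smul, transpose_mul]
  have hAit : (A⁻¹)ᵀ = A⁻¹ := by rw [transpose_nonsing_inv, hAt]
  have hBit : (B⁻¹)ᵀ = B⁻¹ := by rw [transpose_nonsing_inv, hBt]
  -- intertwining relations, with assoc-compatible variants
  have hPM : P * M = M * Q := by rw [hP, hQ, Matrix.mul_assoc]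
  have hPM' : ∀ {k : ℕ} (X : Matrix (Fin n) (Fin k) ℝ), P * (M * X) = M * (Q * X) :=
    fun X => by rw [← Matrix.mul_assoc, hPM, Matrix.mul_assoc]
  have hQMt : Q * Mᵀ = Mᵀ * P := by rw [hP, hQ, Matrix.mul_assoc]
  have hQMt' : ∀ {k : ℕ} (X : Matrix (Fin m) (Fin k) ℝ), Q * (Mᵀ * X) = Mᵀ * (P * X) :=
    fun X => by rw [← Matrix.mul_assoc, hQMt, Matrix.mul_assoc]
  have hMMt' : ∀ {k : ℕ} (X : Matrix (Fin m) (Fin k) ℝ), M * (Mᵀ * X) = P * X :=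
    fun X => by rw [← Matrix.mul_assoc, ← hP]
  have hMtM' : ∀ {k : ℕ} (X : Matrix (Fin n) (Fin k) ℝ), Mᵀ * (M * X) = Q * X :=
    fun X => by rw [← Matrix.mul_assoc, ← hQ]
  have hMB : M * B = A * M := by
    rw [hA, hB, Matrix.mul_add, Matrix.add_mul, Matrix.mul_one, Matrix.one_mul,
      Matrix.mul_smul, Matrix.smul_mul, hPM]
  have hMi : A⁻¹ * M = M * B⁻¹ := by
    calc A⁻¹ * M = A⁻¹ * M * (B * B⁻¹) := by rw [hBB', Matrix.mul_one]
    _ = A⁻¹ * (M * B) * B⁻¹ := by simp only [Matrix.mul_assoc]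
    _ = A⁻¹ * A * (M * B⁻¹) := by rw [hMB]; simp only [Matrix.mul_assoc]
    _ = M * B⁻¹ := by rw [hAA, Matrix.one_mul]
  have hMi' : ∀ {k : ℕ} (X : Matrix (Fin n) (Fin k) ℝ), A⁻¹ * (M * X) = M * (B⁻¹ * X) :=
    fun X => by rw [← Matrix.mul_assoc, hMi, Matrix.mul_assoc]
  have hMit : B⁻¹ * Mᵀ = Mᵀ * A⁻¹ := by
    have := congrArg Matrix.transpose hMi
    simpa [transpose_mul, hAit, hBit] using this.symm
  have hMit' : ∀ {k : ℕ} (X : Matrix (Fin m) (Fin k) ℝ), B⁻¹ * (Mᵀ * X) = Mᵀ * (A⁻¹ * X) :=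
    fun X => by rw [← Matrix.mul_assoc, hMit, Matrix.mul_assoc]
  have hPA : P * A = A * P := by
    rw [hA, Matrix.mul_add, Matrix.add_mul, Matrix.mul_one, Matrix.one_mul,
      Matrix.mul_smul, Matrix.smul_mul]
  have hAP' : A * (P * A⁻¹) = P := by
    rw [← Matrix.mul_assoc, ← hPA, Matrix.mul_assoc, hAA', Matrix.mul_one]
  have hPAi : P * A⁻¹ = A⁻¹ * P := by
    calc P * A⁻¹ = (A⁻¹ * A) * (P * A⁻¹) := by rw [hAA, Matrix.one_mul]
    _ = A⁻¹ * (A * (P * A⁻¹)) := by rw [Matrix.mul_assoc]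
    _ = A⁻¹ * P := by rw [hAP']
  have hPAi' : ∀ {k : ℕ} (X : Matrix (Fin m) (Fin k) ℝ), P * (A⁻¹ * X) = A⁻¹ * (P * X) :=
    fun X => by rw [← Matrix.mul_assoc, hPAi, Matrix.mul_assoc]
  have hQB : Q * B = B * Q := by
    rw [hB, Matrix.mul_add, Matrix.add_mul, Matrix.mul_one, Matrix.one_mul,
      Matrix.mul_smul, Matrix.smul_mul]
  have hBQ' : B * (Q * B⁻¹) = Q := by
    rw [← Matrix.mul_assoc, ← hQB, Matrix.mul_assoc, hBB', Matrix.mul_one]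
  have hQBi : Q * B⁻¹ = B⁻¹ * Q := by
    calc Q * B⁻¹ = (B⁻¹ * B) * (Q * B⁻¹) := by rw [hBB, Matrix.one_mul]
    _ = B⁻¹ * (B * (Q * B⁻¹)) := by rw [Matrix.mul_assoc]
    _ = B⁻¹ * Q := by rw [hBQ']
  have hQBi' : ∀ {k : ℕ} (X : Matrix (Fin n) (Fin k) ℝ), Q * (B⁻¹ * X) = B⁻¹ * (Q * X) :=
    fun X => by rw [← Matrix.mul_assoc, hQBi, Matrix.mul_assoc]
  set S : Matrix (Fin m) (Fin m) ℝ := A⁻¹ * P * A⁻¹ with hS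
  set T : Matrix (Fin n) (Fin n) ℝ := B⁻¹ * Q * B⁻¹ with hT
  have hSt : Sᵀ = S := by
    simp only [hS, hP, transpose_mul, transpose_transpose, hAit, Matrix.mul_assoc]
  have hTt : Tᵀ = T := by
    simp only [hT, hQ, transpose_mul, transpose_transpose, hBit, Matrix.mul_assoc]
  -- key matrix identities
  have hcross : S * M = M * T := by
    simp only [hS, hT, Matrix.mul_assoc, hMi, hMi', hPM, hPM', hMtM', hMMt', hQMt', hPAi', hQBi']
  have eMTM : M * T * Mᵀ = A⁻¹ * (A⁻¹ * (P * P)) := by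
    simp only [hT, Matrix.mul_assoc, hMit, hMit', hQMt, hQMt', hMMt', hPAi, hPAi']
  have eMSM : Mᵀ * S * M = B⁻¹ * (B⁻¹ * (Q * Q)) := by
    simp only [hS, Matrix.mul_assoc, hMi, hMi', hPM, hPM', hMtM', hQBi, hQBi']
  have eS : S = A⁻¹ * (A⁻¹ * P) := by rw [hS, Matrix.mul_assoc, hPAi]
  have eT : T = B⁻¹ * (B⁻¹ * Q) := by rw [hT, Matrix.mul_assoc, hQBi]
  have ePA : P * A = P + α ^ 2 • (P * P) := by
    rw [hA, Matrix.mul_add, Matrix.mul_one, Matrix.mul_smul]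
  have eQB : Q * B = Q + α ^ 2 • (Q * Q) := by
    rw [hB, Matrix.mul_add, Matrix.mul_one, Matrix.mul_smul]
  have h1 : S + α ^ 2 • (M * T * Mᵀ) = A⁻¹ * P := by
    calc S + α ^ 2 • (M * T * Mᵀ)
        = A⁻¹ * (A⁻¹ * P) + α ^ 2 • (A⁻¹ * (A⁻¹ * (P * P))) := by rw [eS, eMTM]
      _ = A⁻¹ * (A⁻¹ * (P + α ^ 2 • (P * P))) := by
          rw [Matrix.mul_add, Matrix.mul_add, Matrix.mul_smul, Matrix.mul_smul]
      _ = A⁻¹ * (A⁻¹ * (A * P)) := by rw [← ePA, hPA]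
      _ = A⁻¹ * P := by rw [← Matrix.mul_assoc A⁻¹ A P, hAA, Matrix.one_mul]
  have h2 : T + α ^ 2 • (Mᵀ * S * M) = B⁻¹ * Q := by
    calc T + α ^ 2 • (Mᵀ * S * M)
        = B⁻¹ * (B⁻¹ * Q) + α ^ 2 • (B⁻¹ * (B⁻¹ * (Q * Q))) := by rw [eT, eMSM]
      _ = B⁻¹ * (B⁻¹ * (Q + α ^ 2 • (Q * Q))) := by
          rw [Matrix.mul_add, Matrix.mul_add, Matrix.mul_smul, Matrix.mul_smul]
      _ = B⁻¹ * (B⁻¹ * (B * Q)) := by rw [← eQB, hQB]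
      _ = B⁻¹ * Q := by rw [← Matrix.mul_assoc B⁻¹ B Q, hBB, Matrix.one_mul]
  -- vector-level reductions
  have norm1 : ∀ (x : Fin m → ℝ), (Mᵀ *ᵥ x) ⬝ᵥ (Mᵀ *ᵥ x) = x ⬝ᵥ (P *ᵥ x) := fun x => by
    rw [dot_aux, transpose_transpose, mulVec_mulVec, ← hP]
  have norm2 : ∀ (y : Fin n → ℝ), (M *ᵥ y) ⬝ᵥ (M *ᵥ y) = y ⬝ᵥ (Q *ᵥ y) := fun y => by
    rw [dot_aux, mulVec_mulVec, ← hQ]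
  have quad1 : ∀ (w : Fin m → ℝ), (A⁻¹ *ᵥ w) ⬝ᵥ (P *ᵥ (A⁻¹ *ᵥ w)) = w ⬝ᵥ (S *ᵥ w) :=
    fun w => by rw [dot_aux, hAit, mulVec_mulVec, mulVec_mulVec, ← hS]
  have quad2 : ∀ (w : Fin n → ℝ), (B⁻¹ *ᵥ w) ⬝ᵥ (Q *ᵥ (B⁻¹ *ᵥ w)) = w ⬝ᵥ (T *ᵥ w) :=
    fun w => by rw [dot_aux, hBit, mulVec_mulVec, mulVec_mulVec, ← hT]
  -- scalar consequences
  have s1 : a ⬝ᵥ (S *ᵥ a) + α ^ 2 * (a ⬝ᵥ ((M * T * Mᵀ) *ᵥ a)) = a ⬝ᵥ ((A⁻¹ * P) *ᵥ a) := by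
    have := congrArg (fun X : Matrix (Fin m) (Fin m) ℝ => a ⬝ᵥ (X *ᵥ a)) h1
    simpa [add_mulVec, smul_mulVec, dotProduct_add, dotProduct_smul] using this
  have s2 : b ⬝ᵥ (T *ᵥ b) + α ^ 2 * (b ⬝ᵥ ((Mᵀ * S * M) *ᵥ b)) = b ⬝ᵥ ((B⁻¹ * Q) *ᵥ b) := by
    have := congrArg (fun X : Matrix (Fin n) (Fin n) ℝ => b ⬝ᵥ (X *ᵥ b)) h2
    simpa [add_mulVec, smul_mulVec, dotProduct_add, dotProduct_smul] using this
  have hbb : (-b) ⬝ᵥ (T *ᵥ (-b)) = b ⬝ᵥ (T *ᵥ b) := by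
    simp [mulVec_neg, neg_dotProduct, dotProduct_neg]
  have hba : (-b) ⬝ᵥ ((T * Mᵀ) *ᵥ a) = -(a ⬝ᵥ ((M * T) *ᵥ b)) := by
    have h : a ⬝ᵥ ((M * T) *ᵥ b) = b ⬝ᵥ ((T * Mᵀ) *ᵥ a) := by
      rw [dotProduct_comm, dot_aux, transpose_mul, hTt]
    simp [h, neg_dotProduct]
  -- assemble
  rw [norm1, norm2, quad1, quad2, bilin_aux S hSt M α a b, bilin_aux T hTt Mᵀ α (-b) a,
    transpose_transpose, hbb, hba, hcross]
  linarith [s1, s2]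
end

section
/- Let M be an m×n real matrix, α ∈ ℝ, a ∈ ℝᵐ, b ∈ ℝⁿ, and define u = (I + α²MMᵀ)⁻¹(a + α·M·b) and v = (I + α²MᵀM)⁻¹(−b + α·Mᵀ·a). Then α²·(‖Mᵀu‖² + ‖Mv‖²) ≤ ‖a‖² + ‖b‖². -/
/-!
With `A = 1 + α²MMᵀ` and `B = 1 + α²MᵀM` we have `AM = MB`, and from this the update directions
reconstruct the gradients exactly: `a = u + αMv` and `b = αMᵀu - v`. Expanding
`‖a‖² + ‖b‖²`, the cross terms `±2α⟪u, Mv⟫` cancel, leaving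
`‖a‖² + ‖b‖² = ‖u‖² + ‖v‖² + α²(‖Mᵀu‖² + ‖Mv‖²)`.
-/

open Matrix

variable {m n R : Type*} [Fintype m] [Fintype n]

section CommRing

variable [CommRing R]

lemma dotProduct_self_add_smul_mulVec_add_dotProduct_self_smul_transpose_mulVec_sub
    (M : Matrix m n R) (c : R) (u : m → R) (v : n → R) :
    (u + c • M *ᵥ v) ⬝ᵥ (u + c • M *ᵥ v) + (c • Mᵀ *ᵥ u - v) ⬝ᵥ (c • Mᵀ *ᵥ u - v) =
      u ⬝ᵥ u + v ⬝ᵥ v + c ^ 2 * ((Mᵀ *ᵥ u) ⬝ᵥ (Mᵀ *ᵥ u) + (M *ᵥ v) ⬝ᵥ (M *ᵥ v)) := by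
  have hcross : u ⬝ᵥ M *ᵥ v = Mᵀ *ᵥ u ⬝ᵥ v := by
    rw [dotProduct_comm (Mᵀ *ᵥ u), dotProduct_transpose_mulVec]
  simp only [add_dotProduct, dotProduct_add, sub_dotProduct, dotProduct_sub, smul_dotProduct,
    dotProduct_smul, smul_eq_mul, dotProduct_comm (M *ᵥ v) u, dotProduct_comm v (Mᵀ *ᵥ u),
    hcross]
  ring

variable [DecidableEq m]

lemma mulVec_eq_of_eq_nonsing_inv_mulVec {A : Matrix m m R} (hA : IsUnit A) {x y : m → R}
    (h : x = A⁻¹ *ᵥ y) : A *ᵥ x = y := by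
  rw [h, mulVec_mulVec, mul_nonsing_inv _ ((isUnit_iff_isUnit_det _).mp hA), one_mulVec]

variable [DecidableEq n]

lemma one_add_smul_mul_transpose_mul (M : Matrix m n R) (c : R) :
    (1 + c • (M * Mᵀ)) * M = M * (1 + c • (Mᵀ * M)) := by
  rw [Matrix.add_mul, Matrix.mul_add, Matrix.one_mul, Matrix.mul_one, Matrix.smul_mul, Matrix.mul_smul,
    Matrix.mul_assoc]

lemma add_smul_mulVec_eq_of_mulVec_eq (M : Matrix m n R) {α : R} {a u : m → R} {b v : n → R}
    (hA : IsUnit (1 + α ^ 2 • (M * Mᵀ)))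
    (hu : (1 + α ^ 2 • (M * Mᵀ)) *ᵥ u = a + α • M *ᵥ b)
    (hv : (1 + α ^ 2 • (Mᵀ * M)) *ᵥ v = -b + α • Mᵀ *ᵥ a) :
    u + α • M *ᵥ v = a := by
  apply mulVec_injective_of_isUnit hA
  calc (1 + α ^ 2 • (M * Mᵀ)) *ᵥ (u + α • M *ᵥ v)
      = (1 + α ^ 2 • (M * Mᵀ)) *ᵥ u + α • M *ᵥ ((1 + α ^ 2 • (Mᵀ * M)) *ᵥ v) := by
        rw [mulVec_add, mulVec_smul, mulVec_mulVec, one_add_smul_mul_transpose_mul,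
          ← mulVec_mulVec]
    _ = (1 + α ^ 2 • (M * Mᵀ)) *ᵥ a := by
        rw [hu, hv]
        simp only [mulVec_add, mulVec_neg, mulVec_smul, add_mulVec, smul_mulVec, one_mulVec,
          mulVec_mulVec]
        module

lemma smul_transpose_mulVec_sub_eq_of_mulVec_eq (M : Matrix m n R) {α : R} {a u : m → R}
    {b v : n → R} (hB : IsUnit (1 + α ^ 2 • (Mᵀ * M)))
    (hu : (1 + α ^ 2 • (M * Mᵀ)) *ᵥ u = a + α • M *ᵥ b)
    (hv : (1 + α ^ 2 • (Mᵀ * M)) *ᵥ v = -b + α • Mᵀ *ᵥ a) :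
    α • Mᵀ *ᵥ u - v = b := by
  -- the previous lemma for `Mᵀ`, gradients `(-b, a)` and directions `(v, -u)`
  have hu' : (1 + α ^ 2 • (Mᵀᵀ * Mᵀ)) *ᵥ -u = -a + α • Mᵀᵀ *ᵥ -b := by
    rw [transpose_transpose, mulVec_neg, hu, mulVec_neg, smul_neg, neg_add]
  have hvu := add_smul_mulVec_eq_of_mulVec_eq Mᵀ hB hv hu'
  rw [mulVec_neg, smul_neg, ← sub_eq_add_neg] at hvu
  rw [← neg_sub, hvu, neg_neg]

end CommRing

lemma isUnit_one_add_smul_mul_transpose [DecidableEq m] {c : ℝ} (hc : 0 ≤ c)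
    (M : Matrix m n ℝ) : IsUnit (1 + c • (M * Mᵀ)) := by
  have hM : (M * Mᵀ).PosSemidef := by
    simpa using posSemidef_self_mul_conjTranspose M
  exact (PosDef.one.add_posSemidef (hM.smul hc)).isUnit

/-- `α²(‖Mᵀu‖² + ‖Mv‖²) ≤ ‖a‖² + ‖b‖²` for the CGO update directions `u, v`. -/
theorem cgo_cross_norm_bound (m n : ℕ) (M : Matrix (Fin m) (Fin n) ℝ) (α : ℝ)
    (a : Fin m → ℝ) (b : Fin n → ℝ) (u : Fin m → ℝ) (v : Fin n → ℝ)
    (hu : u = ((1 + α ^ 2 • (M * Mᵀ))⁻¹).mulVec (a + α • M.mulVec b))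
    (hv : v = ((1 + α ^ 2 • (Mᵀ * M))⁻¹).mulVec (-b + α • Mᵀ.mulVec a)) :
    α ^ 2 * ((Mᵀ.mulVec u) ⬝ᵥ (Mᵀ.mulVec u) + (M.mulVec v) ⬝ᵥ (M.mulVec v)) ≤
      a ⬝ᵥ a + b ⬝ᵥ b := by
  have hA := isUnit_one_add_smul_mul_transpose (sq_nonneg α) M
  have hB : IsUnit (1 + α ^ 2 • (Mᵀ * M)) := by
    simpa using isUnit_one_add_smul_mul_transpose (sq_nonneg α) Mᵀ
  have hAu := mulVec_eq_of_eq_nonsing_inv_mulVec hA hu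
  have hBv := mulVec_eq_of_eq_nonsing_inv_mulVec hB hv
  rw [← add_smul_mulVec_eq_of_mulVec_eq M hA hAu hBv,
    ← smul_transpose_mulVec_sub_eq_of_mulVec_eq M hB hAu hBv,
    dotProduct_self_add_smul_mulVec_add_dotProduct_self_smul_transpose_mulVec_sub]
  have huv : 0 ≤ u ⬝ᵥ u + v ⬝ᵥ v :=
    add_nonneg (dotProduct_self_star_nonneg u) (dotProduct_self_star_nonneg v)
  linarith
end

section
/- Let M be an m×n real matrix, α ∈ ℝ, a ∈ ℝᵐ, b ∈ ℝⁿ, and define u = (I + α²MMᵀ)⁻¹(a + α·M·b) and v = (I + α²MᵀM)⁻¹(−b + α·Mᵀ·a). Then ‖u‖² + ‖v‖² ≤ 4·(‖a‖² + ‖b‖²); that is, the norm of the CGO update direction g_α is at most twice the norm of the plain gradient vector g₀ = (a, −b). -/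
open Matrix

lemma dot_self_nonneg' {k : ℕ} (x : Fin k → ℝ) : 0 ≤ x ⬝ᵥ x :=
  Finset.sum_nonneg fun i _ => mul_self_nonneg _

lemma dot_le_half {k : ℕ} (x y : Fin k → ℝ) : x ⬝ᵥ y ≤ (x ⬝ᵥ x + y ⬝ᵥ y) / 2 := by
  have h : 0 ≤ (x - y) ⬝ᵥ (x - y) := dot_self_nonneg' _
  rw [sub_dotProduct, dotProduct_sub, dotProduct_sub, dotProduct_comm y x] at h
  linarith

lemma cgo_key {p q : ℕ} (N : Matrix (Fin p) (Fin q) ℝ) (α : ℝ) (c : Fin p → ℝ)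
    (d : Fin q → ℝ) (w : Fin p → ℝ)
    (hw : w = ((1 + α ^ 2 • (N * Nᵀ))⁻¹).mulVec (c + α • N.mulVec d)) :
    w ⬝ᵥ w ≤ c ⬝ᵥ c + d ⬝ᵥ d := by
  set P : Matrix (Fin p) (Fin p) ℝ := 1 + α ^ 2 • (N * Nᵀ) with hP
  have hsq : (α • N) * (α • N)ᴴ = α ^ 2 • (N * Nᵀ) := by
    have hNH : Nᴴ = Nᵀ := by ext i j; simp [conjTranspose_apply]
    rw [conjTranspose_smul, star_trivial, hNH, Matrix.smul_mul, Matrix.mul_smul, smul_smul, ← sq]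
  have hpsd : (α ^ 2 • (N * Nᵀ)).PosSemidef := hsq ▸ posSemidef_self_mul_conjTranspose (α • N)
  have hpd : P.PosDef := Matrix.PosDef.add_posSemidef Matrix.PosDef.one hpsd
  have hdet : IsUnit P.det := hpd.det_pos.ne'.isUnit
  have hPw : P.mulVec w = c + α • N.mulVec d := by
    rw [hw, mulVec_mulVec, Matrix.mul_nonsing_inv _ hdet, one_mulVec]
  set s : Fin q → ℝ := Nᵀ.mulVec w with hs
  have hdotP : w ⬝ᵥ P.mulVec w = w ⬝ᵥ w + α ^ 2 * (s ⬝ᵥ s) := by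
    rw [hP, add_mulVec, one_mulVec, dotProduct_add, smul_mulVec, dotProduct_smul]
    congr 1
    rw [← mulVec_mulVec, dotProduct_mulVec, smul_eq_mul, hs]
    rw [mulVec_transpose]
  have hdotR : w ⬝ᵥ (c + α • N.mulVec d) = w ⬝ᵥ c + α * (s ⬝ᵥ d) := by
    rw [dotProduct_add, dotProduct_smul, smul_eq_mul, dotProduct_mulVec, hs,
      mulVec_transpose]
  have heq : w ⬝ᵥ w + α ^ 2 * (s ⬝ᵥ s) = w ⬝ᵥ c + α * (s ⬝ᵥ d) := by
    rw [← hdotP, ← hdotR, hPw]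
  have h1 : w ⬝ᵥ c ≤ (w ⬝ᵥ w + c ⬝ᵥ c) / 2 := dot_le_half w c
  have h2 : α * (s ⬝ᵥ d) ≤ (α ^ 2 * (s ⬝ᵥ s) + d ⬝ᵥ d) / 2 := by
    have := dot_le_half (α • s) d
    rw [smul_dotProduct, smul_dotProduct, dotProduct_smul] at this
    have h' : α • (α • (s ⬝ᵥ s)) = α ^ 2 * (s ⬝ᵥ s) := by simp [smul_eq_mul]; ring
    rw [h'] at this
    simpa [smul_eq_mul] using this
  have h3 : 0 ≤ s ⬝ᵥ s := dot_self_nonneg' s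
  nlinarith [sq_nonneg α]

/-- The squared norm of the CGO update direction `g_α = (u,v)` is at most four times the
squared norm of the plain gradient vector `g₀ = (a, −b)`. -/
theorem cgo_direction_norm_bound (m n : ℕ) (M : Matrix (Fin m) (Fin n) ℝ) (α : ℝ)
    (a : Fin m → ℝ) (b : Fin n → ℝ) (u : Fin m → ℝ) (v : Fin n → ℝ)
    (hu : u = ((1 + α ^ 2 • (M * Mᵀ))⁻¹).mulVec (a + α • M.mulVec b))
    (hv : v = ((1 + α ^ 2 • (Mᵀ * M))⁻¹).mulVec (-b + α • Mᵀ.mulVec a)) :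
    u ⬝ᵥ u + v ⬝ᵥ v ≤ 4 * (a ⬝ᵥ a + b ⬝ᵥ b) := by
  have hU : u ⬝ᵥ u ≤ a ⬝ᵥ a + b ⬝ᵥ b := cgo_key M α a b u hu
  have hV : v ⬝ᵥ v ≤ (-b) ⬝ᵥ (-b) + a ⬝ᵥ a := by
    apply cgo_key Mᵀ α (-b) a v
    rwa [transpose_transpose]
  rw [neg_dotProduct, dotProduct_neg, neg_neg] at hV
  have ha := dot_self_nonneg' a
  have hb := dot_self_nonneg' b
  linarith
end

section
/- Let f : ℝᵐ × ℝⁿ → ℝ be twice continuously differentiable, β > 0, and suppose that for every fixed y the function x ↦ f(x,y) is convex and for every fixed x the function y ↦ f(x,y) is concave. Let z : ℝ → ℝᵐ × ℝⁿ, z(t) = (x(t), y(t)), be a differentiable curve satisfying the gradient-descent-ascent flow x'(t) = −β·∇ₓf(x(t),y(t)), y'(t) = β·∇_yf(x(t),y(t)) for all t. Then the function t ↦ ‖∇ₓf(x(t),y(t))‖² + ‖∇_yf(x(t),y(t))‖² is nonincreasing on ℝ. -/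
/-!
Write `F(x, y) = (∇ₓf, -∇_yf)`. Adding the first-order inequalities of convexity in `x` and of
concavity in `y` at two points shows that `F` is a monotone operator, so the flow `z' = -β F(z)`
is non-expansive: for every shift `h`, the derivative of `‖z(t + h) - z(t)‖²` is
`-2β ⟪F(z(t + h)) - F(z(t)), z(t + h) - z(t)⟫ ≤ 0`. Dividing by `h` and letting `h → 0⁺`, the
speed `‖z'(t)‖ = β ‖F(z(t))‖` is nonincreasing.
-/

open Matrix Set Filter Topology WithLp

section FirstOrder

variable {E : Type*} [NormedAddCommGroup E] [NormedSpace ℝ E] {s : Set E} {φ : E → ℝ}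
  {φ' : E →L[ℝ] ℝ} {a b : E}

theorem ConvexOn.apply_sub_le_sub_of_hasFDerivAt (hφ : ConvexOn ℝ s φ) (ha : a ∈ s) (hb : b ∈ s)
    (hφ' : HasFDerivAt φ φ' a) : φ' (b - a) ≤ φ b - φ a := by
  have hline : ConvexOn ℝ (AffineMap.lineMap (k := ℝ) a b ⁻¹' s)
      (φ ∘ AffineMap.lineMap (k := ℝ) a b) := hφ.comp_affineMap _
  have hderiv : HasDerivAt (φ ∘ AffineMap.lineMap (k := ℝ) a b) (φ' (b - a)) 0 := by
    refine HasFDerivAt.comp_hasDerivAt (0 : ℝ) ?_ AffineMap.hasDerivAt_lineMap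
    simpa using hφ'
  simpa [slope] using hline.le_slope_of_hasDerivAt (by simpa using ha) (by simpa using hb)
    zero_lt_one hderiv

theorem ConcaveOn.sub_le_apply_sub_of_hasFDerivAt (hφ : ConcaveOn ℝ s φ) (ha : a ∈ s) (hb : b ∈ s)
    (hφ' : HasFDerivAt φ φ' a) : φ b - φ a ≤ φ' (b - a) := by
  have := hφ.neg.apply_sub_le_sub_of_hasFDerivAt ha hb hφ'.neg
  simp only [_root_.neg_apply, Pi.neg_apply] at this
  linarith

end FirstOrder

section Saddle

variable {E F : Type*} [NormedAddCommGroup E] [NormedSpace ℝ E] [NormedAddCommGroup F]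
  [NormedSpace ℝ F] {f : E × F → ℝ} {f' : E × F → E × F →L[ℝ] ℝ}

theorem fderiv_monotone_of_convex_concave (hf : ∀ z, HasFDerivAt f (f' z) z)
    (hconv : ∀ c, ConvexOn ℝ univ fun a => f (a, c))
    (hconc : ∀ a, ConcaveOn ℝ univ fun c => f (a, c)) (z₁ z₂ : E × F) :
    f' z₂ (z₁.1 - z₂.1, z₂.2 - z₁.2) ≤ f' z₁ (z₁.1 - z₂.1, z₂.2 - z₁.2) := by
  obtain ⟨a₁, b₁⟩ := z₁
  obtain ⟨a₂, b₂⟩ := z₂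
  have hx (a : E) (c : F) (b : E) : f' (a, c) (b - a, 0) ≤ f (b, c) - f (a, c) :=
    (hconv c).apply_sub_le_sub_of_hasFDerivAt (mem_univ a) (mem_univ b)
      ((hf (a, c)).comp a (hasFDerivAt_prodMk_left a c))
  have hy (a : E) (c d : F) : f (a, d) - f (a, c) ≤ f' (a, c) (0, d - c) :=
    (hconc a).sub_le_apply_sub_of_hasFDerivAt (mem_univ c) (mem_univ d)
      ((hf (a, c)).comp c (hasFDerivAt_prodMk_right a c))
  have hsplit (L : E × F →L[ℝ] ℝ) (u : E) (v : F) : L (u, v) = L (u, 0) + L (0, v) := by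
    rw [← map_add, Prod.mk_add_mk, add_zero, zero_add]
  have h₁ := hx a₁ b₁ a₂
  have h₂ := hx a₂ b₂ a₁
  have h₃ := hy a₁ b₁ b₂
  have h₄ := hy a₂ b₂ b₁
  rw [← neg_sub a₁ a₂, ← neg_zero, ← Prod.neg_mk, map_neg] at h₁
  rw [← neg_sub b₂ b₁, ← neg_zero, ← Prod.neg_mk, map_neg] at h₄
  dsimp only
  rw [hsplit (f' (a₁, b₁)), hsplit (f' (a₂, b₂))]
  linarith

end Saddle

section Flow

variable {E : Type*} [NormedAddCommGroup E] [InnerProductSpace ℝ E] {z v : ℝ → E}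

theorem antitone_norm_sub_shift_of_inner_sub_nonpos (hz : ∀ t, HasDerivAt z (v t) t)
    (hv : ∀ s t, inner ℝ (v s - v t) (z s - z t) ≤ 0) (h : ℝ) :
    Antitone fun t => ‖z (t + h) - z t‖ := by
  have hsq : Antitone fun t => ‖z (t + h) - z t‖ ^ 2 := by
    refine antitone_of_hasDerivAt_nonpos
      (f' := fun t => 2 * inner ℝ (z (t + h) - z t) (v (t + h) - v t)) (fun t => ?_) fun t => ?_
    · exact (((hz (t + h)).comp_add_const t h).sub (hz t)).norm_sq
    · simpa [real_inner_comm] using mul_nonpos_of_nonneg_of_nonpos zero_le_two (hv (t + h) t)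
  exact fun s t hst => (sq_le_sq₀ (norm_nonneg _) (norm_nonneg _)).1 (hsq hst)

theorem antitone_norm_of_inner_sub_nonpos (hz : ∀ t, HasDerivAt z (v t) t)
    (hv : ∀ s t, inner ℝ (v s - v t) (z s - z t) ≤ 0) : Antitone fun t => ‖v t‖ := by
  intro s t hst
  have hslope (u : ℝ) : Tendsto (fun h : ℝ => h⁻¹ * ‖z (u + h) - z u‖) (𝓝[>] 0) (𝓝 ‖v u‖) := by
    refine ((hz u).tendsto_slope_zero_right.norm).congr' ?_
    filter_upwards [self_mem_nhdsWithin] with h (hh : 0 < h)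
    rw [norm_smul, Real.norm_of_nonneg (inv_nonneg.2 hh.le)]
  refine le_of_tendsto_of_tendsto (hslope t) (hslope s) ?_
  filter_upwards [self_mem_nhdsWithin] with h (hh : 0 < h)
  exact mul_le_mul_of_nonneg_left (antitone_norm_sub_shift_of_inner_sub_nonpos hz hv h hst)
    (inv_nonneg.2 hh.le)

end Flow

section SumElim

variable {ι κ : Type*} [Fintype ι] [Fintype κ]

theorem EuclideanSpace.inner_toLp_sumElim (a c : ι → ℝ) (b d : κ → ℝ) :
    inner ℝ (toLp 2 (Sum.elim a b) : EuclideanSpace ℝ (ι ⊕ κ)) (toLp 2 (Sum.elim c d)) =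
      a ⬝ᵥ c + b ⬝ᵥ d := by
  rw [EuclideanSpace.inner_toLp_toLp, star_trivial, sumElim_dotProduct_sumElim,
    dotProduct_comm c, dotProduct_comm d]

theorem HasDerivAt.toLp_sumElim {x : ℝ → ι → ℝ} {y : ℝ → κ → ℝ} {x' : ι → ℝ} {y' : κ → ℝ}
    {t : ℝ} (hx : HasDerivAt x x' t) (hy : HasDerivAt y y' t) :
    HasDerivAt (fun t => (toLp 2 (Sum.elim (x t) (y t)) : EuclideanSpace ℝ (ι ⊕ κ)))
      (toLp 2 (Sum.elim x' y')) t := by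
  have hsum : HasDerivAt (fun t => Sum.elim (x t) (y t)) (Sum.elim x' y') t :=
    hasDerivAt_pi.2 fun
      | .inl i => hasDerivAt_pi.1 hx i
      | .inr j => hasDerivAt_pi.1 hy j
  exact (PiLp.continuousLinearEquiv 2 ℝ _).symm.hasFDerivAt.comp_hasDerivAt t hsum

end SumElim

theorem gda_flow_sq_grad_norm_antitone_general (m n : ℕ)
    (f : (Fin m → ℝ) × (Fin n → ℝ) → ℝ)
    (β : ℝ) (hβ : 0 < β)
    (gx : (Fin m → ℝ) × (Fin n → ℝ) → Fin m → ℝ)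
    (gy : (Fin m → ℝ) × (Fin n → ℝ) → Fin n → ℝ)
    (hgrad : ∀ z, ∃ L : ((Fin m → ℝ) × (Fin n → ℝ)) →L[ℝ] ℝ,
      HasFDerivAt f L z ∧ ∀ w, L w = gx z ⬝ᵥ w.1 + gy z ⬝ᵥ w.2)
    (hconv : ∀ y₀ : Fin n → ℝ, ConvexOn ℝ Set.univ fun x₀ => f (x₀, y₀))
    (hconc : ∀ x₀ : Fin m → ℝ, ConcaveOn ℝ Set.univ fun y₀ => f (x₀, y₀))
    (x : ℝ → Fin m → ℝ) (y : ℝ → Fin n → ℝ)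
    (hx : ∀ t, HasDerivAt x ((-β) • gx (x t, y t)) t)
    (hy : ∀ t, HasDerivAt y (β • gy (x t, y t)) t) :
    Antitone fun t => gx (x t, y t) ⬝ᵥ gx (x t, y t) + gy (x t, y t) ⬝ᵥ gy (x t, y t) := by
  choose L hL hLapply using hgrad
  -- `Fin m → ℝ` carries the sup norm; the flow is run in the Euclidean space on `Fin m ⊕ Fin n`.
  let Z : ℝ → EuclideanSpace ℝ (Fin m ⊕ Fin n) := fun t => toLp 2 (Sum.elim (x t) (y t))
  let V : ℝ → EuclideanSpace ℝ (Fin m ⊕ Fin n) := fun t =>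
    toLp 2 (Sum.elim ((-β) • gx (x t, y t)) (β • gy (x t, y t)))
  have hZ (t : ℝ) : HasDerivAt Z (V t) t := (hx t).toLp_sumElim (hy t)
  have hV (s t : ℝ) : inner ℝ (V s - V t) (Z s - Z t) ≤ 0 := by
    have hmono := fderiv_monotone_of_convex_concave hL hconv hconc (x s, y s) (x t, y t)
    simp only [hLapply, dotProduct_sub] at hmono
    simp only [Z, V, inner_sub_left, inner_sub_right, EuclideanSpace.inner_toLp_sumElim,
      smul_dotProduct, smul_eq_mul]
    linarith [mul_le_mul_of_nonneg_left hmono hβ.le]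
  have hnorm (t : ℝ) : ‖V t‖ ^ 2 =
      β ^ 2 * (gx (x t, y t) ⬝ᵥ gx (x t, y t) + gy (x t, y t) ⬝ᵥ gy (x t, y t)) := by
    rw [← real_inner_self_eq_norm_sq, EuclideanSpace.inner_toLp_sumElim]
    simp only [smul_dotProduct, dotProduct_smul, smul_eq_mul]
    ring
  intro s t hst
  have hsq := pow_le_pow_left₀ (norm_nonneg _) (antitone_norm_of_inner_sub_nonpos hZ hV hst) 2
  rw [hnorm, hnorm] at hsq
  exact le_of_mul_le_mul_left hsq (by positivity)

/-- Along the gradient-descent-ascent flow on a C² convex-concave function, the squared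
gradient norm `‖∇ₓf‖² + ‖∇_yf‖²` is nonincreasing in time. -/
theorem gda_flow_sq_grad_norm_antitone (m n : ℕ)
    (f : (Fin m → ℝ) × (Fin n → ℝ) → ℝ) (hf : ContDiff ℝ 2 f)
    (β : ℝ) (hβ : 0 < β)
    (gx : (Fin m → ℝ) × (Fin n → ℝ) → Fin m → ℝ)
    (gy : (Fin m → ℝ) × (Fin n → ℝ) → Fin n → ℝ)
    (hgrad : ∀ z, ∃ L : ((Fin m → ℝ) × (Fin n → ℝ)) →L[ℝ] ℝ,
      HasFDerivAt f L z ∧ ∀ w, L w = gx z ⬝ᵥ w.1 + gy z ⬝ᵥ w.2)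
    (hconv : ∀ y₀ : Fin n → ℝ, ConvexOn ℝ Set.univ fun x₀ => f (x₀, y₀))
    (hconc : ∀ x₀ : Fin m → ℝ, ConcaveOn ℝ Set.univ fun y₀ => f (x₀, y₀))
    (x : ℝ → Fin m → ℝ) (y : ℝ → Fin n → ℝ)
    (hx : ∀ t, HasDerivAt x ((-β) • gx (x t, y t)) t)
    (hy : ∀ t, HasDerivAt y (β • gy (x t, y t)) t) :
    Antitone fun t => gx (x t, y t) ⬝ᵥ gx (x t, y t) + gy (x t, y t) ⬝ᵥ gy (x t, y t) :=
  gda_flow_sq_grad_norm_antitone_general m n f β hβ gx gy hgrad hconv hconc x y hx hy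
end

section
/- Let g : ℝᵈ → ℝᵈ be continuous, let C ⊆ ℝᵈ be a compact set, and let z* ∈ ℝᵈ be a point such that ⟨g(z), z − z*⟩ > 0 for every z ∈ C. Let (ηₙ) be a sequence of nonnegative reals with Σₙ ηₙ = ∞ and Σₙ ηₙ² < ∞. Then there is no sequence (zₙ) in ℝᵈ satisfying zₙ ∈ C and zₙ₊₁ = zₙ − ηₙ·g(zₙ) for all n. (Consequently, under strict α-coherence, iterates of CGO with such step sizes cannot remain in a compact set disjoint from the saddle points, which yields convergence of CGO to a saddle point.) -/
open scoped RealInnerProductSpace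

/-- Under a strict Minty inequality on a compact set `C` and Robbins–Monro step sizes,
no sequence of iterates `zₙ₊₁ = zₙ − ηₙ g(zₙ)` can remain in `C`. -/
theorem no_trapped_iterates_of_strict_minty (d : ℕ)
    (g : EuclideanSpace ℝ (Fin d) → EuclideanSpace ℝ (Fin d)) (hg : Continuous g)
    (C : Set (EuclideanSpace ℝ (Fin d))) (hC : IsCompact C)
    (zs : EuclideanSpace ℝ (Fin d)) (hminty : ∀ z ∈ C, 0 < ⟪g z, z - zs⟫)
    (η : ℕ → ℝ) (hη : ∀ n, 0 ≤ η n)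
    (hdiv : Filter.Tendsto (fun N => ∑ k ∈ Finset.range N, η k) Filter.atTop Filter.atTop)
    (hsq : Summable fun n => η n ^ 2) :
    ¬ ∃ z : ℕ → EuclideanSpace ℝ (Fin d),
      (∀ n, z n ∈ C) ∧ ∀ n, z (n + 1) = z n - η n • g (z n) := by
  rintro ⟨z, hzC, hrec⟩
  have hne : C.Nonempty := ⟨z 0, hzC 0⟩
  have hf : Continuous fun x => ⟪g x, x - zs⟫ :=
    hg.inner (continuous_id.sub continuous_const)
  obtain ⟨zε, hzε, hεmin⟩ := hC.exists_isMinOn hne hf.continuousOn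
  set ε := ⟪g zε, zε - zs⟫ with hεdef
  have hεpos : 0 < ε := hminty _ hzε
  have hgn : Continuous fun x => ‖g x‖ ^ 2 := hg.norm.pow 2
  obtain ⟨zM, hzM, hMmax⟩ := hC.exists_isMaxOn hne hgn.continuousOn
  set M := ‖g zM‖ ^ 2 with hMdef
  have hM0 : 0 ≤ M := sq_nonneg _
  have key : ∀ n, ‖z (n+1) - zs‖^2 ≤ ‖z n - zs‖^2 - 2*ε*η n + M * η n ^ 2 := by
    intro n
    have h1 : z (n+1) - zs = (z n - zs) - η n • g (z n) := by rw [hrec]; abel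
    rw [h1, norm_sub_sq_real]
    have hinner : ⟪z n - zs, η n • g (z n)⟫ = η n * ⟪g (z n), z n - zs⟫ := by
      rw [real_inner_smul_right, real_inner_comm]
    have h2 : ε ≤ ⟪g (z n), z n - zs⟫ := hεmin (hzC n)
    have h3 : ‖η n • g (z n)‖^2 = η n ^ 2 * ‖g (z n)‖^2 := by
      rw [norm_smul]; rw [Real.norm_eq_abs, mul_pow, sq_abs]
    have h4 : ‖g (z n)‖^2 ≤ M := hMmax (hzC n)
    rw [hinner, h3]
    nlinarith [hη n, sq_nonneg (η n)]
  have hsum : ∀ N, ‖z N - zs‖^2 ≤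
      ‖z 0 - zs‖^2 - 2*ε*(∑ k ∈ Finset.range N, η k) + M * ∑ k ∈ Finset.range N, η k ^ 2 := by
    intro N
    induction N with
    | zero => simp
    | succ N ih =>
      rw [Finset.sum_range_succ, Finset.sum_range_succ]
      have := key N
      nlinarith
  set S := ∑' n, η n ^ 2 with hSdef
  have hpart : ∀ N, ∑ k ∈ Finset.range N, η k ^ 2 ≤ S := fun N =>
    Summable.sum_le_tsum _ (fun i _ => sq_nonneg _) hsq
  obtain ⟨N, hN⟩ := (hdiv.eventually
    (Filter.eventually_gt_atTop ((‖z 0 - zs‖^2 + M*S)/(2*ε)))).exists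
  have hNsum := hsum N
  have h0 : (0:ℝ) ≤ ‖z N - zs‖^2 := sq_nonneg _
  have hp := hpart N
  have h2ε : 0 < 2*ε := by linarith
  rw [div_lt_iff₀ h2ε] at hN
  nlinarith [mul_le_mul_of_nonneg_left hp hM0]
end

section
/- Let g : ℝᵈ → ℝᵈ be L-Lipschitz, let p ∈ ℝᵈ satisfy the Minty-type inequality ⟨g(z), z − p⟩ ≥ 0 for every z ∈ ℝᵈ, and let η > 0. For any z ∈ ℝᵈ define the extra-gradient (optimistic) step z½ = z − η·g(z) and z⁺ = z − η·g(z½). Then ‖z⁺ − p‖² ≤ ‖z − p‖² − (1 − η²L²)·‖z½ − z‖². -/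
open scoped RealInnerProductSpace

/-- One-step estimate for the extra-gradient (optimistic) step with an `L`-Lipschitz field
satisfying the Minty inequality at `p`:
`‖z⁺ − p‖² ≤ ‖z − p‖² − (1 − η²L²)‖z½ − z‖²`. -/
theorem extragradient_one_step_estimate (d : ℕ)
    (g : EuclideanSpace ℝ (Fin d) → EuclideanSpace ℝ (Fin d)) (L : ℝ)
    (hLip : ∀ z₁ z₂, ‖g z₁ - g z₂‖ ≤ L * ‖z₁ - z₂‖)
    (p : EuclideanSpace ℝ (Fin d)) (hp : ∀ z, 0 ≤ ⟪g z, z - p⟫)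
    (η : ℝ) (hη : 0 < η) (z : EuclideanSpace ℝ (Fin d)) :
    ‖(z - η • g (z - η • g z)) - p‖ ^ 2 ≤
      ‖z - p‖ ^ 2 - (1 - η ^ 2 * L ^ 2) * ‖(z - η • g z) - z‖ ^ 2 := by
  set w := z - η • g z with hw
  have hM : 0 ≤ ⟪g w, w - p⟫ := hp w
  have hL : ‖g w - g z‖ ≤ L * ‖w - z‖ := hLip w z
  have hwz : w - z = -(η • g z) := by rw [hw]; abel
  have hnorm : ‖w - z‖ = η * ‖g z‖ := by
    rw [hwz, norm_neg, norm_smul, Real.norm_eq_abs, abs_of_pos hη]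
  have hnorm2 : ‖w - z‖ ^ 2 = η ^ 2 * ‖g z‖ ^ 2 := by rw [hnorm]; ring
  have h1 : ‖(z - η • g w) - p‖ ^ 2
      = ‖z - p‖ ^ 2 - 2 * (η * ⟪g w, z - p⟫) + η ^ 2 * ‖g w‖ ^ 2 := by
    have e : (z - η • g w) - p = (z - p) - η • g w := by abel
    rw [e, norm_sub_sq_real, real_inner_smul_right, norm_smul, Real.norm_eq_abs,
      abs_of_pos hη, real_inner_comm, mul_pow]
  have h2 : ⟪g w, z - p⟫ = ⟪g w, w - p⟫ + η * ⟪g w, g z⟫ := by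
    have e : z - p = (w - p) + η • g z := by rw [hw]; abel
    rw [e, inner_add_right, real_inner_smul_right]
  have h3 : ‖g w - g z‖ ^ 2 = ‖g w‖ ^ 2 - 2 * ⟪g w, g z⟫ + ‖g z‖ ^ 2 :=
    norm_sub_sq_real _ _
  have h4 : ‖g w - g z‖ ^ 2 ≤ L ^ 2 * ‖w - z‖ ^ 2 := by
    nlinarith [norm_nonneg (g w - g z), norm_nonneg (w - z)]
  nlinarith [mul_nonneg hη.le hM, mul_le_mul_of_nonneg_left h4 (sq_nonneg η),
    sq_nonneg η, sq_nonneg (‖g z‖)]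
end

section
/- Let g : ℝᵈ → ℝᵈ be L-Lipschitz, let p ∈ ℝᵈ satisfy ⟨g(z), z − p⟩ ≥ 0 for every z ∈ ℝᵈ, and let 0 < η < 1/L. Define the extra-gradient (optimistic) iteration z_{n+½} = zₙ − η·g(zₙ), z_{n+1} = zₙ − η·g(z_{n+½}) from an arbitrary starting point z₀. Then for every n ≥ 1, (1/n)·Σ_{k=0}^{n−1} ‖g(z_k)‖² ≤ ‖z₀ − p‖² / (n·η²·(1 − η²L²)); in particular the running average of the squared update-field norms is O(1/n). -/
open scoped RealInnerProductSpace

/-- `O(1/n)` rate for the running average of squared update-field norms along the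
extra-gradient (optimistic) iteration with an `L`-Lipschitz Minty field and `0 < η < 1/L`. -/
theorem extragradient_average_rate (d : ℕ)
    (g : EuclideanSpace ℝ (Fin d) → EuclideanSpace ℝ (Fin d)) (L : ℝ)
    (hLip : ∀ z₁ z₂, ‖g z₁ - g z₂‖ ≤ L * ‖z₁ - z₂‖)
    (p : EuclideanSpace ℝ (Fin d)) (hp : ∀ z, 0 ≤ ⟪g z, z - p⟫)
    (η : ℝ) (hη₁ : 0 < η) (hη₂ : η < 1 / L)
    (z : ℕ → EuclideanSpace ℝ (Fin d))
    (hz : ∀ n, z (n + 1) = z n - η • g (z n - η • g (z n))) :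
    ∀ n : ℕ, 1 ≤ n →
      (1 / n : ℝ) * ∑ k ∈ Finset.range n, ‖g (z k)‖ ^ 2 ≤
        ‖z 0 - p‖ ^ 2 / (n * η ^ 2 * (1 - η ^ 2 * L ^ 2)) := by
  have hL : 0 < L := by
    by_contra h
    push_neg at h
    have : 1 / L ≤ 0 := one_div_nonpos.mpr h
    linarith
  have hηL : η * L < 1 := (lt_div_iff₀ hL).mp hη₂
  have hc1 : 0 < 1 - η ^ 2 * L ^ 2 := by nlinarith [mul_pos hη₁ hL]
  set c := η ^ 2 * (1 - η ^ 2 * L ^ 2) with hcdef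
  have hcpos : 0 < c := by positivity
  have step : ∀ n, ‖z (n + 1) - p‖ ^ 2 ≤ ‖z n - p‖ ^ 2 - c * ‖g (z n)‖ ^ 2 := by
    intro n
    set w := z n - η • g (z n) with hw
    have hzn : z (n + 1) - p = (z n - p) - η • g w := by
      rw [hz n]; abel
    have h1 : ‖z (n + 1) - p‖ ^ 2
        = ‖z n - p‖ ^ 2 - 2 * (η * ⟪g w, z n - p⟫) + η ^ 2 * ‖g w‖ ^ 2 := by
      rw [hzn, norm_sub_sq_real, real_inner_smul_right, real_inner_comm, norm_smul]
      try rw [Real.norm_eq_abs, mul_pow, sq_abs]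
      try ring
    have hdecomp : ⟪g w, z n - p⟫ = ⟪g w, w - p⟫ + η * ⟪g w, g (z n)⟫ := by
      have : z n - p = (w - p) + η • g (z n) := by rw [hw]; abel
      rw [this, inner_add_right, real_inner_smul_right]
    have hminty : 0 ≤ ⟪g w, w - p⟫ := hp w
    have hlip : ‖g w - g (z n)‖ ≤ L * (η * ‖g (z n)‖) := by
      have := hLip w (z n)
      have hwz : ‖w - z n‖ = η * ‖g (z n)‖ := by
        rw [hw]
        have : z n - η • g (z n) - z n = -(η • g (z n)) := by abel
        rw [this, norm_neg, norm_smul, Real.norm_eq_abs, abs_of_pos hη₁]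
      rwa [hwz] at this
    have hlip2 : ‖g w - g (z n)‖ ^ 2 ≤ L ^ 2 * η ^ 2 * ‖g (z n)‖ ^ 2 := by
      nlinarith [norm_nonneg (g w - g (z n)), norm_nonneg (g (z n)),
        mul_nonneg (mul_nonneg hL.le hη₁.le) (norm_nonneg (g (z n)))]
    have hsq : ‖g w - g (z n)‖ ^ 2
        = ‖g w‖ ^ 2 - 2 * ⟪g w, g (z n)⟫ + ‖g (z n)‖ ^ 2 := norm_sub_sq_real _ _
    rw [h1, hcdef]
    nlinarith [mul_nonneg hη₁.le hminty, sq_nonneg η]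
  have key : ∀ n, ‖z n - p‖ ^ 2 + c * ∑ k ∈ Finset.range n, ‖g (z k)‖ ^ 2
      ≤ ‖z 0 - p‖ ^ 2 := by
    intro n
    induction n with
    | zero => simp
    | succ m ih =>
      rw [Finset.sum_range_succ]
      have := step m
      nlinarith
  intro n hn
  have hn' : (0 : ℝ) < n := by exact_mod_cast hn
  have hS : ∑ k ∈ Finset.range n, ‖g (z k)‖ ^ 2 ≤ ‖z 0 - p‖ ^ 2 / c := by
    rw [le_div_iff₀ hcpos]
    nlinarith [key n, sq_nonneg ‖z n - p‖]
  have hrw : (n : ℝ) * η ^ 2 * (1 - η ^ 2 * L ^ 2) = c * n := by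
    rw [hcdef]; ring
  rw [hrw, ← div_div, one_div, inv_mul_eq_div]
  gcongr
end

section
/- Let g : ℝᵈ → ℝᵈ be L-Lipschitz, suppose there exists p ∈ ℝᵈ with ⟨g(z), z − p⟩ ≥ 0 for every z ∈ ℝᵈ, and suppose that every zero z* of g (g(z*) = 0) also satisfies ⟨g(z), z − z*⟩ ≥ 0 for every z ∈ ℝᵈ. Let 0 < η < 1/L and define the extra-gradient (optimistic) iteration z_{n+½} = zₙ − η·g(zₙ), z_{n+1} = zₙ − η·g(z_{n+½}) from an arbitrary z₀. Then the sequence (zₙ) converges to some z* ∈ ℝᵈ with g(z*) = 0. -/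
open scoped RealInnerProductSpace

/-- Convergence of the extra-gradient (optimistic) iteration to a zero of an `L`-Lipschitz
field `g` that admits a Minty point and satisfies the Minty inequality at every zero
(the coherence condition), for step sizes `0 < η < 1/L`. -/
theorem extragradient_converges_to_zero_of_coherent (d : ℕ)
    (g : EuclideanSpace ℝ (Fin d) → EuclideanSpace ℝ (Fin d)) (L : ℝ)
    (hLip : ∀ z₁ z₂, ‖g z₁ - g z₂‖ ≤ L * ‖z₁ - z₂‖)
    (hex : ∃ p, ∀ z, 0 ≤ ⟪g z, z - p⟫)
    (hcoh : ∀ zs, g zs = 0 → ∀ z, 0 ≤ ⟪g z, z - zs⟫)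
    (η : ℝ) (hη₁ : 0 < η) (hη₂ : η < 1 / L)
    (z : ℕ → EuclideanSpace ℝ (Fin d))
    (hz : ∀ n, z (n + 1) = z n - η • g (z n - η • g (z n))) :
    ∃ zs, Filter.Tendsto z Filter.atTop (nhds zs) ∧ g zs = 0 := by
  classical
  -- L is positive
  have hL : 0 < L := by
    by_contra h
    push_neg at h
    have : (1 : ℝ) / L ≤ 0 := one_div_nonpos.mpr h
    linarith
  have hηL : η * L < 1 := by
    have := mul_lt_mul_of_pos_right hη₂ hL
    rwa [one_div_mul_cancel hL.ne'] at this
  set κ : ℝ := 1 - (η * L) ^ 2 with hκdef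
  have hκ : 0 < κ := by
    have h0 : 0 < η * L := mul_pos hη₁ hL
    nlinarith
  -- auxiliary: squared real sequence tending to 0
  have sq_to : ∀ (f : ℕ → ℝ), (∀ n, 0 ≤ f n) →
      Filter.Tendsto (fun n => f n ^ 2) Filter.atTop (nhds 0) →
      Filter.Tendsto f Filter.atTop (nhds 0) := by
    intro f hf h
    have h2 : Filter.Tendsto (fun n => Real.sqrt (f n ^ 2)) Filter.atTop (nhds (Real.sqrt 0)) :=
      (Real.continuous_sqrt.tendsto 0).comp h
    have heq : (fun n => Real.sqrt (f n ^ 2)) = f := funext fun n => Real.sqrt_sq (hf n)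
    rwa [heq, Real.sqrt_zero] at h2
  -- Key Fejér-type inequality
  have key : ∀ p : EuclideanSpace ℝ (Fin d), (∀ y, 0 ≤ ⟪g y, y - p⟫) → ∀ n,
      ‖z (n + 1) - p‖ ^ 2 + κ * ‖η • g (z n)‖ ^ 2 ≤ ‖z n - p‖ ^ 2 := by
    intro p hp n
    set a : EuclideanSpace ℝ (Fin d) := η • g (z n) with ha
    set w : EuclideanSpace ℝ (Fin d) := z n - a with hw
    set b : EuclideanSpace ℝ (Fin d) := η • g w with hb
    have hz1 : z (n + 1) - p = (z n - p) - b := by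
      rw [hz n]; abel
    have e1 : ‖z (n + 1) - p‖ ^ 2
        = ‖z n - p‖ ^ 2 - 2 * ⟪z n - p, b⟫ + ‖b‖ ^ 2 := by
      rw [hz1]; exact norm_sub_sq_real _ _
    have e2 : ‖b - a‖ ^ 2 = ‖b‖ ^ 2 - 2 * ⟪b, a⟫ + ‖a‖ ^ 2 := norm_sub_sq_real _ _
    have e3 : ⟪z n - p, b⟫ = ⟪w - p, b⟫ + ⟪a, b⟫ := by
      have h' : z n - p = (w - p) + a := by rw [hw]; abel
      rw [h', inner_add_left]
    have e4 : 0 ≤ ⟪w - p, b⟫ := by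
      have h' : ⟪w - p, b⟫ = η * ⟪g w, w - p⟫ := by
        rw [hb, real_inner_smul_right, real_inner_comm]
      rw [h']
      exact mul_nonneg hη₁.le (hp w)
    have e5 : ‖b - a‖ ≤ (η * L) * ‖a‖ := by
      have h' : b - a = η • (g w - g (z n)) := by rw [hb, ha, smul_sub]
      rw [h', norm_smul, Real.norm_eq_abs, abs_of_pos hη₁]
      have h1 : ‖g w - g (z n)‖ ≤ L * ‖w - z n‖ := hLip w (z n)
      have h2 : ‖w - z n‖ = ‖a‖ := by
        have : w - z n = -a := by rw [hw]; abel
        rw [this, norm_neg]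
      rw [h2] at h1
      calc η * ‖g w - g (z n)‖ ≤ η * (L * ‖a‖) :=
            mul_le_mul_of_nonneg_left h1 hη₁.le
        _ = (η * L) * ‖a‖ := by ring
    have e6 : ‖b - a‖ ^ 2 ≤ (η * L) ^ 2 * ‖a‖ ^ 2 := by
      nlinarith [norm_nonneg (b - a), norm_nonneg a, mul_pos hη₁ hL]
    have comm : ⟪a, b⟫ = ⟪b, a⟫ := real_inner_comm _ _
    have hexp : κ * ‖a‖ ^ 2 = ‖a‖ ^ 2 - (η * L) ^ 2 * ‖a‖ ^ 2 := by
      rw [hκdef]; ring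
    linarith [e1, e2, e3, e4, e6]
  obtain ⟨p₀, hp₀⟩ := hex
  set S : ℕ → ℝ := fun n => ‖z n - p₀‖ ^ 2 with hSdef
  have hstep : ∀ n, S (n + 1) + κ * ‖η • g (z n)‖ ^ 2 ≤ S n := key p₀ hp₀
  have hSnonneg : ∀ n, 0 ≤ S n := fun n => sq_nonneg _
  have hSanti : Antitone S := antitone_nat_of_succ_le (fun n => by
    have := hstep n
    have h0 : 0 ≤ κ * ‖η • g (z n)‖ ^ 2 := mul_nonneg hκ.le (sq_nonneg _)
    linarith)
  have hSbdd : BddBelow (Set.range S) := by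
    refine ⟨0, ?_⟩
    rintro x ⟨n, rfl⟩
    exact hSnonneg n
  have hSconv : Filter.Tendsto S Filter.atTop (nhds (⨅ n, S n)) :=
    tendsto_atTop_ciInf hSanti hSbdd
  have hSconv' : Filter.Tendsto (fun n => S (n + 1)) Filter.atTop (nhds (⨅ n, S n)) :=
    hSconv.comp (Filter.tendsto_add_atTop_nat 1)
  have hdiff : Filter.Tendsto (fun n => S n - S (n + 1)) Filter.atTop (nhds 0) := by
    simpa using hSconv.sub hSconv'
  -- g (z n) → 0
  have hκa : Filter.Tendsto (fun n => κ * ‖η • g (z n)‖ ^ 2) Filter.atTop (nhds 0) := by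
    refine squeeze_zero (fun n => mul_nonneg hκ.le (sq_nonneg _)) (fun n => ?_) hdiff
    linarith [hstep n]
  have ha2 : Filter.Tendsto (fun n => ‖η • g (z n)‖ ^ 2) Filter.atTop (nhds 0) := by
    have := hκa.const_mul κ⁻¹
    simp only [← mul_assoc, inv_mul_cancel₀ hκ.ne', one_mul, mul_zero] at this
    exact this
  have hanorm : Filter.Tendsto (fun n => ‖η • g (z n)‖) Filter.atTop (nhds 0) :=
    sq_to _ (fun n => norm_nonneg _) ha2
  have hatend : Filter.Tendsto (fun n => η • g (z n)) Filter.atTop (nhds 0) :=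
    tendsto_zero_iff_norm_tendsto_zero.mpr hanorm
  have hgz : Filter.Tendsto (fun n => g (z n)) Filter.atTop (nhds 0) := by
    have h' := hatend.const_smul η⁻¹
    simp only [smul_smul, inv_mul_cancel₀ hη₁.ne', one_smul, smul_zero] at h'
    exact h'
  -- boundedness and convergent subsequence
  have hball : ∀ n, z n ∈ Metric.closedBall p₀ (Real.sqrt (S 0)) := by
    intro n
    rw [Metric.mem_closedBall, dist_eq_norm]
    have h1 : ‖z n - p₀‖ = Real.sqrt (S n) := by
      rw [hSdef]; exact (Real.sqrt_sq (norm_nonneg _)).symm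
    rw [h1]
    exact Real.sqrt_le_sqrt (hSanti (Nat.zero_le n))
  obtain ⟨zs, -, φ, hφmono, hφtend⟩ :=
    tendsto_subseq_of_bounded Metric.isBounded_closedBall hball
  -- g is continuous
  have hgcont : Continuous g := by
    have : LipschitzWith (Real.toNNReal L) g := by
      apply LipschitzWith.of_dist_le_mul
      intro x y
      rw [dist_eq_norm, dist_eq_norm, Real.coe_toNNReal L hL.le]
      exact hLip x y
    exact this.continuous
  have h1 : Filter.Tendsto (fun k => g (z (φ k))) Filter.atTop (nhds (g zs)) :=
    (hgcont.tendsto zs).comp hφtend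
  have h2 : Filter.Tendsto (fun k => g (z (φ k))) Filter.atTop (nhds 0) :=
    hgz.comp hφmono.tendsto_atTop
  have hgzs : g zs = 0 := tendsto_nhds_unique h1 h2
  refine ⟨zs, ?_, hgzs⟩
  -- Fejér monotonicity with respect to zs
  have hmz := hcoh zs hgzs
  set T : ℕ → ℝ := fun n => ‖z n - zs‖ ^ 2 with hTdef
  have hTstep : ∀ n, T (n + 1) + κ * ‖η • g (z n)‖ ^ 2 ≤ T n := key zs hmz
  have hTanti : Antitone T := antitone_nat_of_succ_le (fun n => by
    have := hTstep n
    have h0 : 0 ≤ κ * ‖η • g (z n)‖ ^ 2 := mul_nonneg hκ.le (sq_nonneg _)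
    linarith)
  have hTbdd : BddBelow (Set.range T) := by
    refine ⟨0, ?_⟩
    rintro x ⟨n, rfl⟩
    exact sq_nonneg _
  have hTconv : Filter.Tendsto T Filter.atTop (nhds (⨅ n, T n)) :=
    tendsto_atTop_ciInf hTanti hTbdd
  have hTsub : Filter.Tendsto (fun k => T (φ k)) Filter.atTop (nhds (⨅ n, T n)) :=
    hTconv.comp hφmono.tendsto_atTop
  have hTsub0 : Filter.Tendsto (fun k => T (φ k)) Filter.atTop (nhds 0) := by
    have hd : Filter.Tendsto (fun k => z (φ k) - zs) Filter.atTop (nhds 0) := by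
      simpa using hφtend.sub_const zs
    have hn : Filter.Tendsto (fun k => ‖z (φ k) - zs‖) Filter.atTop (nhds 0) :=
      tendsto_zero_iff_norm_tendsto_zero.mp hd
    have := hn.pow 2
    simpa [hTdef] using this
  have hinf0 : (⨅ n, T n) = 0 := tendsto_nhds_unique hTsub hTsub0
  rw [hinf0] at hTconv
  have hTnorm : Filter.Tendsto (fun n => ‖z n - zs‖) Filter.atTop (nhds 0) :=
    sq_to _ (fun n => norm_nonneg _) hTconv
  have : Filter.Tendsto (fun n => z n - zs) Filter.atTop (nhds 0) :=
    tendsto_zero_iff_norm_tendsto_zero.mpr hTnorm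
  have h' := this.add_const zs
  simpa using h'
end
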